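/- For z on the unit circle S¹ ⊂ ℂ, the clutching function a(z) satisfying exp((1/z) ρ_n(X)) v_n = a(z) · exp(z ρ_n(Y)) v_0 is given by a(z) = n!/zⁿ = n! · z̄ⁿ. -/

import Mathlib

/-!
The matrices `ρ_n(X)` and `ρ_n(Y)` are strictly triangular, hence nilpotent, so both
exponentials are finite sums. On the basis, `ρ_n(X)^k v_n = n(n-1)⋯(n-k+1) k! v_{n-k}` and
`ρ_n(Y)^k v_0 = v_k`, so the `i`-th coordinate of `exp(s ρ_n(X)) v_n` is `(n!/i!) s^(n-i)` and
that of `exp(t ρ_n(Y)) v_0` is `t^i/i!`. For `s = 1/z`, `t = z` they differ by the factor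
`n!/z^n`, and `1/z = z̄` on the unit circle.
-/

open Finset Matrix
open scoped Nat

theorem Matrix.IsUpperTriangular.pow_card_eq_zero {ι R : Type*} [Fintype ι] [DecidableEq ι]
    [LinearOrder ι] [CommRing R] {M : Matrix ι ι R} (hM : M.IsUpperTriangular)
    (hdiag : ∀ i, M i i = 0) : M ^ Fintype.card ι = 0 := by
  simpa [charpoly_of_isUpperTriangular M hM, hdiag] using aeval_self_charpoly M

theorem Matrix.IsLowerTriangular.pow_card_eq_zero {ι R : Type*} [Fintype ι] [DecidableEq ι]
    [LinearOrder ι] [CommRing R] {M : Matrix ι ι R} (hM : M.IsLowerTriangular)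
    (hdiag : ∀ i, M i i = 0) : M ^ Fintype.card ι = 0 := by
  have hMt : Mᵀ.IsUpperTriangular := fun _ _ h => hM h
  rw [← transpose_transpose M, ← transpose_pow, hMt.pow_card_eq_zero hdiag, transpose_zero]

theorem NormedSpace.exp_eq_sum_range_of_pow_eq_zero (𝕂 : Type*) {A : Type*} [Field 𝕂]
    [CharZero 𝕂] [Ring A] [Algebra 𝕂 A] [TopologicalSpace A] [IsTopologicalRing A] {a : A} {N : ℕ}
    (ha : a ^ N = 0) : exp a = ∑ k ∈ range N, (k ! : 𝕂)⁻¹ • a ^ k := by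
  rw [exp_eq_tsum 𝕂]
  exact tsum_eq_sum fun k hk => by
    rw [pow_eq_zero_of_le (by simpa using hk) ha, smul_zero]

theorem Matrix.exp_smul_mulVec_apply_of_pow_eq_zero {ι 𝕂 : Type*} [Fintype ι] [DecidableEq ι]
    [RCLike 𝕂] {M : Matrix ι ι 𝕂} {N : ℕ} (hM : M ^ N = 0) (c : 𝕂) (v : ι → 𝕂) (i : ι) :
    (NormedSpace.exp (c • M) *ᵥ v) i = ∑ k ∈ range N, c ^ k / k ! * (M ^ k *ᵥ v) i := by
  have hcM : (c • M) ^ N = 0 := by rw [smul_pow, hM, smul_zero]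
  rw [NormedSpace.exp_eq_sum_range_of_pow_eq_zero 𝕂 hcM, sum_mulVec, Finset.sum_apply]
  refine sum_congr rfl fun k _ => ?_
  rw [smul_pow, smul_smul, smul_mulVec, Pi.smul_apply, smul_eq_mul, div_eq_inv_mul]

theorem Matrix.mulVec_ite_val_eq_apply {R : Type*} [NonUnitalNonAssocSemiring R] {l m : ℕ}
    (M : Matrix (Fin l) (Fin m) R) (k : ℕ) (c : R) (i : Fin l) :
    (M *ᵥ fun j => if (j : ℕ) = k then c else 0) i = if h : k < m then M i ⟨k, h⟩ * c else 0 := by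
  simp only [mulVec, dotProduct]
  split_ifs with h
  · rw [Fintype.sum_eq_single ⟨k, h⟩ fun j hj => by
      rw [if_neg (fun hjk => hj (Fin.ext hjk)), mul_zero], if_pos rfl]
  · exact Fintype.sum_eq_zero _ fun j => by rw [if_neg (by omega), mul_zero]

def rhoX (n : ℕ) : Matrix (Fin (n + 1)) (Fin (n + 1)) ℂ :=
  of fun i j => if (j : ℕ) = (i : ℕ) + 1 then ((j : ℕ) : ℂ) * ((n : ℂ) - ((j : ℕ) : ℂ) + 1) else 0

def rhoY (n : ℕ) : Matrix (Fin (n + 1)) (Fin (n + 1)) ℂ :=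
  of fun i j => if (i : ℕ) = (j : ℕ) + 1 then 1 else 0

theorem rhoX_pow_mulVec_single_last_apply (n k : ℕ) (i : Fin (n + 1)) :
    (rhoX n ^ k *ᵥ Pi.single (Fin.last n) 1) i =
      if (i : ℕ) = n - k then (n.descFactorial k * k ! : ℂ) else 0 := by
  induction k generalizing i with
  | zero =>
    rw [pow_zero, one_mulVec, Pi.single_apply, Nat.sub_zero]
    simp [Fin.ext_iff]
  | succ k ih =>
    rw [pow_succ', ← mulVec_mulVec, funext ih, mulVec_ite_val_eq_apply, dif_pos (by omega),
      rhoX, of_apply]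
    by_cases h : n - k = (i : ℕ) + 1
    · rw [if_pos h, if_pos (by omega), Nat.descFactorial_succ, Nat.factorial_succ]
      push_cast [Nat.cast_sub (show k ≤ n by omega)]
      ring
    · rw [if_neg h, zero_mul]
      split_ifs with hi
      · rw [Nat.descFactorial_eq_zero_iff_lt.2 (by omega), Nat.cast_zero, zero_mul]
      · rfl

theorem rhoY_pow_mulVec_single_zero_apply (n k : ℕ) (i : Fin (n + 1)) :
    (rhoY n ^ k *ᵥ Pi.single 0 1) i = if (i : ℕ) = k then 1 else 0 := by
  induction k generalizing i with
  | zero =>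
    simp only [pow_zero, one_mulVec, Pi.single_apply, Fin.ext_iff, Fin.val_zero]
  | succ k ih =>
    rw [pow_succ', ← mulVec_mulVec, funext ih, mulVec_ite_val_eq_apply]
    split_ifs with hk hi hi
    · rw [rhoY, of_apply, if_pos hi, mul_one]
    · rw [rhoY, of_apply, if_neg hi, mul_one]
    · omega
    · rfl

theorem rhoX_pow_eq_zero (n : ℕ) : rhoX n ^ (n + 1) = 0 := by
  have hX : (rhoX n).IsUpperTriangular := fun i j hji => if_neg (by simp at hji; omega)
  simpa using hX.pow_card_eq_zero fun i => if_neg (by omega)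

theorem rhoY_pow_eq_zero (n : ℕ) : rhoY n ^ (n + 1) = 0 := by
  have hY : (rhoY n).IsLowerTriangular := fun i j hij => if_neg (by simp at hij; omega)
  simpa using hY.pow_card_eq_zero fun i => if_neg (by omega)

theorem exp_smul_rhoX_mulVec_single_last_apply (n : ℕ) (s : ℂ) (i : Fin (n + 1)) :
    (NormedSpace.exp (s • rhoX n) *ᵥ Pi.single (Fin.last n) 1) i =
      (n ! / (i : ℕ)! : ℂ) * s ^ (n - i) := by
  have hfac : (i : ℕ)! * n.descFactorial (n - i) = n ! := by
    simpa [Nat.sub_sub_self i.is_le] using Nat.factorial_mul_descFactorial (n.sub_le i)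
  simp_rw [exp_smul_mulVec_apply_of_pow_eq_zero (rhoX_pow_eq_zero n),
    rhoX_pow_mulVec_single_last_apply]
  rw [sum_eq_single_of_mem (n - i) (mem_range.2 (by omega)) fun k hk hki => by
    rw [if_neg (by simp at hk; omega), mul_zero], if_pos (Nat.sub_sub_self i.is_le).symm, ← hfac]
  push_cast
  field_simp [Nat.factorial_ne_zero]

theorem exp_smul_rhoY_mulVec_single_zero_apply (n : ℕ) (t : ℂ) (i : Fin (n + 1)) :
    (NormedSpace.exp (t • rhoY n) *ᵥ Pi.single 0 1) i = t ^ (i : ℕ) / (i : ℕ)! := by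
  simp_rw [exp_smul_mulVec_apply_of_pow_eq_zero (rhoY_pow_eq_zero n),
    rhoY_pow_mulVec_single_zero_apply, mul_ite, mul_one, mul_zero]
  rw [sum_ite_eq, if_pos (mem_range.2 i.is_lt)]

theorem stmt5_general (n : ℕ) (z : ℂ) (hz : ‖z‖ = 1)
    (X Y : Matrix (Fin (n + 1)) (Fin (n + 1)) ℂ)
    (hX : ∀ i j, X i j = if (j : ℕ) = (i : ℕ) + 1 then
      ((j : ℕ) : ℂ) * ((n : ℂ) - ((j : ℕ) : ℂ) + 1) else 0)
    (hY : ∀ i j, Y i j = if (i : ℕ) = (j : ℕ) + 1 then 1 else 0) :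
    (NormedSpace.exp ((1 / z) • X)).mulVec (Pi.single (Fin.last n) 1) =
      ((n.factorial : ℂ) / z ^ n) • (NormedSpace.exp (z • Y)).mulVec (Pi.single 0 1)
    ∧ (n.factorial : ℂ) / z ^ n = (n.factorial : ℂ) * (starRingEnd ℂ z) ^ n := by
  obtain rfl : X = rhoX n := Matrix.ext hX
  obtain rfl : Y = rhoY n := Matrix.ext hY
  have hz0 : z ≠ 0 := norm_ne_zero_iff.1 (by rw [hz]; exact one_ne_zero)
  refine ⟨funext fun i => ?_, ?_⟩
  · rw [exp_smul_rhoX_mulVec_single_last_apply, Pi.smul_apply,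
      exp_smul_rhoY_mulVec_single_zero_apply, smul_eq_mul, ← pow_mul_pow_sub z i.is_le, one_div,
      inv_pow]
    field_simp
  · rw [← Complex.inv_eq_conj hz, inv_pow, div_eq_mul_inv]

/-- For `z` on the unit circle, the clutching function satisfies
`exp((1/z) X) v_n = (n!/zⁿ) • exp(z Y) v₀`, and `n!/zⁿ = n! · conj(z)ⁿ`. -/
theorem stmt5 (n : ℕ) (hn : 1 ≤ n) (z : ℂ) (hz : ‖z‖ = 1)
    (X Y : Matrix (Fin (n + 1)) (Fin (n + 1)) ℂ)
    (hX : ∀ i j, X i j = if (j : ℕ) = (i : ℕ) + 1 then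
      ((j : ℕ) : ℂ) * ((n : ℂ) - ((j : ℕ) : ℂ) + 1) else 0)
    (hY : ∀ i j, Y i j = if (i : ℕ) = (j : ℕ) + 1 then 1 else 0) :
    (NormedSpace.exp ((1 / z) • X)).mulVec (Pi.single (Fin.last n) 1) =
      ((n.factorial : ℂ) / z ^ n) • (NormedSpace.exp (z • Y)).mulVec (Pi.single 0 1)
    ∧ (n.factorial : ℂ) / z ^ n = (n.factorial : ℂ) * (starRingEnd ℂ z) ^ n :=
  stmt5_general n z hz X Y hX hY
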